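/- arXiv:2603.11115 — 5 statements merged into one kernel-verified Lean document; each statement's English description precedes it below -/
import Mathlib

section
/- Let H be a group with trivial center and A an abelian group. Then every automorphism χ of G = H × A has the form χ(h,a) = (φ(h), α(h)·ψ(a)) for some φ ∈ Aut(H), ψ ∈ Aut(A), and homomorphism α : H → A. Equivalently, the homomorphism ι : M(H,A) → Aut(H × A) from the matrix description is an isomorphism. -/
/-- Auxiliary: if `H` has trivial centre, any automorphism of `H × A` sends `(1, a)` to an
element with trivial first component, since `{1} × A` is the centre. -/
lemma aut_fst_of_center_triv {H A : Type*} [Group H] [CommGroup A]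
    (hc : Subgroup.center H = ⊥) (χ : MulAut (H × A)) (a : A) : (χ (1, a)).1 = 1 := by
  have hmem : χ (1, a) ∈ Subgroup.center (H × A) := by
    rw [Subgroup.mem_center_iff]
    intro g
    obtain ⟨g', rfl⟩ := χ.surjective g
    rw [← map_mul, ← map_mul]
    congr 1
    exact Prod.ext (by simp) (by simp [mul_comm])
  have h1 : (χ (1, a)).1 ∈ Subgroup.center H := by
    rw [Subgroup.mem_center_iff]
    intro g
    have := (Subgroup.mem_center_iff.mp hmem) (g, 1)
    exact congrArg Prod.fst this
  rw [hc] at h1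
  exact h1

/-- If `H` has trivial centre and `A` is abelian, every automorphism `χ` of `G = H × A`
has the form `χ(h,a) = (φ(h), α(h)·ψ(a))` with `φ ∈ Aut(H)`, `ψ ∈ Aut(A)`, `α ∈ Hom(H,A)`. -/
theorem aut_of_product_with_centerless_factor {H A : Type*} [Group H] [CommGroup A]
    (hc : Subgroup.center H = ⊥) (χ : MulAut (H × A)) :
    ∃ (φ : MulAut H) (ψ : MulAut A) (α : H →* A),
      ∀ (h : H) (a : A), χ (h, a) = (φ h, α h * ψ a) := by
  have key : ∀ a : A, (χ (1, a)).1 = 1 := aut_fst_of_center_triv hc χ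
  have key' : ∀ a : A, (χ.symm (1, a)).1 = 1 := aut_fst_of_center_triv hc χ.symm
  -- the automorphism ψ of A
  refine ⟨?_, ⟨⟨fun a => (χ (1, a)).2, fun a => (χ.symm (1, a)).2, ?_, ?_⟩, ?_⟩,
    (MonoidHom.snd H A).comp (χ.toMonoidHom.comp (MonoidHom.inl H A)), ?_⟩
  · -- the automorphism φ of H
    refine ⟨⟨fun h => (χ (h, 1)).1, fun h => (χ.symm (h, 1)).1, ?_, ?_⟩, ?_⟩
    · intro h
      show (χ.symm ((χ (h, 1)).1, 1)).1 = h
      have e1 : ((χ (h, 1)).1, (1 : A)) = χ (h, 1) * (1, (χ (h, 1)).2)⁻¹ := by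
        ext <;> simp
      rw [e1, map_mul, map_inv]
      have : χ.symm (χ (h, 1)) = (h, 1) := χ.left_inv _
      rw [this]
      have := key' ((χ (h, 1)).2)
      simp [this]
    · intro h
      show (χ ((χ.symm (h, 1)).1, 1)).1 = h
      have e1 : ((χ.symm (h, 1)).1, (1 : A)) = χ.symm (h, 1) * (1, (χ.symm (h, 1)).2)⁻¹ := by
        ext <;> simp
      rw [e1, map_mul, map_inv]
      have : χ (χ.symm (h, 1)) = (h, 1) := χ.right_inv _
      rw [this]
      have := key ((χ.symm (h, 1)).2)
      simp [this]
    · intro h h'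
      show (χ (h * h', 1)).1 = (χ (h, 1)).1 * (χ (h', 1)).1
      have : ((h, (1 : A)) : H × A) * (h', 1) = (h * h', 1) := by ext <;> simp
      rw [← this, map_mul]
      rfl
  · -- ψ left inverse
    intro a
    show (χ.symm (1, (χ (1, a)).2)).2 = a
    have : ((1 : H), (χ (1, a)).2) = χ (1, a) := Prod.ext (key a).symm rfl
    rw [this]
    have : χ.symm (χ (1, a)) = (1, a) := χ.left_inv _
    rw [this]
  · -- ψ right inverse
    intro a
    show (χ (1, (χ.symm (1, a)).2)).2 = a
    have : ((1 : H), (χ.symm (1, a)).2) = χ.symm (1, a) := Prod.ext (key' a).symm rfl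
    rw [this]
    have : χ (χ.symm (1, a)) = (1, a) := χ.right_inv _
    rw [this]
  · -- ψ map_mul
    intro a a'
    show (χ (1, a * a')).2 = (χ (1, a)).2 * (χ (1, a')).2
    have : ((1 : H), a * a') = ((1 : H), a) * (1, a') := by ext <;> simp
    rw [this, map_mul]
    rfl
  · -- the main formula
    intro h a
    have : ((h, a) : H × A) = (h, 1) * (1, a) := by ext <;> simp
    rw [this, map_mul]
    exact Prod.ext (by simp [key a]) rfl
end

section
/- Let G = G₁ × ⋯ × G_k × A where each G_i is a nontrivial, directly indecomposable group with trivial center and A is abelian. Then every automorphism of G permutes the subgroups ⟨G_i, A⟩ = G_i × A (viewing G_i and A as subgroups of G): for each φ ∈ Aut(G) there is a permutation σ of {1,…,k} with φ(⟨G_j, A⟩) = ⟨G_{σ(j)}, A⟩ for all j. -/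
/-- A group is directly indecomposable if it is nontrivial and is not the internal direct
product of two nontrivial (normal) subgroups. -/
def DirectlyIndecomposable (G : Type*) [Group G] : Prop :=
  Nontrivial G ∧ ∀ H K : Subgroup G, H.Normal → K.Normal →
    H ⊓ K = ⊥ → H ⊔ K = ⊤ → H = ⊥ ∨ K = ⊥

section Aux

variable {k : ℕ} {Gf : Fin k → Type*} [∀ i, Group (Gf i)] {A : Type*} [CommGroup A]

def bigF (Gf : Fin k → Type*) [∀ i, Group (Gf i)] (A : Type*) [CommGroup A]
    (S : Set (Fin k)) : Subgroup ((∀ i, Gf i) × A) where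
  carrier := {x | ∀ i ∉ S, x.1 i = 1}
  one_mem' := by intro i _; rfl
  mul_mem' := by
    intro x y hx hy i hi
    simp only [Prod.fst_mul, Pi.mul_apply, hx i hi, hy i hi, one_mul]
  inv_mem' := by
    intro x hx i hi
    simp only [Prod.fst_inv, Pi.inv_apply, hx i hi, inv_one]

lemma mem_bigF {S : Set (Fin k)} {x : (∀ i, Gf i) × A} :
    x ∈ bigF Gf A S ↔ ∀ i ∉ S, x.1 i = 1 := Iff.rfl

lemma bigF_normal (S : Set (Fin k)) : (bigF Gf A S).Normal := by
  constructor
  intro x hx g i hi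
  simp only [Prod.fst_mul, Pi.mul_apply, Prod.fst_inv, Pi.inv_apply, hx i hi]
  group

lemma factor_eq_bigF
    (hind : ∀ i, DirectlyIndecomposable (Gf i))
    (hz : ∀ i, Subgroup.center (Gf i) = ⊥)
    (N M : Subgroup ((∀ i, Gf i) × A)) (hN : N.Normal) (hM : M.Normal)
    (hinf : N ⊓ M = ⊥) (hsup : N ⊔ M = ⊤)
    (hZ : ∀ x : (∀ i, Gf i) × A, x.1 = 1 → x ∈ N) :
    N = bigF Gf A {i | ∀ a : Gf i, ((Pi.mulSingle i a, 1) : (∀ i, Gf i) × A) ∈ N} := by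
  haveI := hN; haveI := hM
  -- elements of N and M commute
  have comm : ∀ n ∈ N, ∀ m ∈ M, n * m = m * n := by
    intro n hn m hm
    have h1 : n * m * n⁻¹ * m⁻¹ ∈ N ⊓ M := by
      refine Subgroup.mem_inf.mpr ⟨?_, ?_⟩
      · have : n * (m * n⁻¹ * m⁻¹) ∈ N := mul_mem hn (hN.conj_mem _ (inv_mem hn) m)
        simpa [mul_assoc] using this
      · exact mul_mem (hM.conj_mem _ hm n) (inv_mem hm)
    rw [hinf, Subgroup.mem_bot] at h1
    calc n * m = (n * m * n⁻¹ * m⁻¹) * (m * n) := by group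
    _ = m * n := by rw [h1, one_mul]
  -- decomposition
  have decomp : ∀ g : (∀ i, Gf i) × A, ∃ n ∈ N, ∃ m ∈ M, g = n * m := by
    intro g
    have hg : g ∈ (↑(N ⊔ M) : Set _) := by rw [hsup]; trivial
    rw [Subgroup.normal_mul] at hg
    obtain ⟨n, hn, m, hm, h⟩ := hg
    exact ⟨n, hn, m, hm, h.symm⟩
  -- uniqueness of decompositions
  have uniq : ∀ {n₁ n₂ m₁ m₂ : (∀ i, Gf i) × A}, n₁ ∈ N → n₂ ∈ N → m₁ ∈ M → m₂ ∈ M →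
      n₁ * m₁ = n₂ * m₂ → n₁ = n₂ ∧ m₁ = m₂ := by
    intro n₁ n₂ m₁ m₂ hn₁ hn₂ hm₁ hm₂ h
    have h1 : n₂⁻¹ * n₁ ∈ N ⊓ M := by
      refine Subgroup.mem_inf.mpr ⟨?_, ?_⟩
      · exact mul_mem (inv_mem hn₂) hn₁
      · have : n₂⁻¹ * n₁ = m₂ * m₁⁻¹ := by
          have := congrArg (fun z => n₂⁻¹ * z * m₁⁻¹) h
          simpa [mul_assoc] using this
        rw [this]; exact mul_mem hm₂ (inv_mem hm₁)
    rw [hinf, Subgroup.mem_bot] at h1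
    have e1 : n₁ = n₂ := by
      have := congrArg (fun z => n₂ * z) h1
      simpa using this
    refine ⟨e1, ?_⟩
    subst e1
    exact mul_left_cancel h
  -- the key dichotomy for each index
  have key : ∀ i : Fin k,
      (∀ a : Gf i, ((Pi.mulSingle i a, 1) : (∀ i, Gf i) × A) ∈ N) ∨
      (∀ n ∈ N, n.1 i = 1) := by
    intro i
    set Fi := bigF Gf A {i} with hFidef
    haveI hFiN : Fi.Normal := bigF_normal _
    set π : ((∀ i, Gf i) × A) →* Gf i :=
      (Pi.evalMonoidHom Gf i).comp (MonoidHom.fst _ _) with hπdef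
    have hπ : Function.Surjective π := by
      intro a
      refine ⟨(Pi.mulSingle i a, 1), ?_⟩
      simp [hπdef]
    -- decomposition of mulSingle elements stays in Fi
    have main_decomp : ∀ a : Gf i, ∃ n ∈ N ⊓ Fi, ∃ m ∈ M ⊓ Fi,
        ((Pi.mulSingle i a, 1) : (∀ i, Gf i) × A) = n * m := by
      intro a
      obtain ⟨n, hn, m, hm, hg⟩ := decomp (Pi.mulSingle i a, 1)
      have hnFi : n ∈ Fi := by
        intro j hj
        have hj' : j ≠ i := by simpa using hj
        have hcen : n.1 j ∈ Subgroup.center (Gf j) := by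
          rw [Subgroup.mem_center_iff]
          intro b
          obtain ⟨n', hn', m', hm', hh⟩ := decomp (Pi.mulSingle j b, 1)
          have hgh : ((Pi.mulSingle i a, 1) : (∀ i, Gf i) × A) * (Pi.mulSingle j b, 1)
              = (Pi.mulSingle j b, 1) * (Pi.mulSingle i a, 1) := by
            have hc := Pi.mulSingle_commute (f := Gf) (hj'.symm) a b
            refine Prod.ext ?_ ?_
            · simpa using hc.eq
            · simp
          have e1 : (n * n') * (m * m') = (n' * n) * (m' * m) := by
            calc (n * n') * (m * m') = n * (n' * m) * m' := by group
            _ = n * (m * n') * m' := by rw [comm n' hn' m hm]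
            _ = (n * m) * (n' * m') := by group
            _ = (n' * m') * (n * m) := by rw [← hg, ← hh, hgh]
            _ = n' * (m' * n) * m := by group
            _ = n' * (n * m') * m := by rw [comm n hn m' hm']
            _ = (n' * n) * (m' * m) := by group
          obtain ⟨e2, _⟩ := uniq (mul_mem hn hn') (mul_mem hn' hn)
            (mul_mem hm hm') (mul_mem hm' hm) e1
          have e3 : n * (Pi.mulSingle j b, (1:A)) = (Pi.mulSingle j b, 1) * n := by
            calc n * ((Pi.mulSingle j b, 1) : (∀ i, Gf i) × A) = n * (n' * m') := by rw [← hh]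
            _ = (n * n') * m' := by rw [mul_assoc]
            _ = (n' * n) * m' := by rw [e2]
            _ = n' * (n * m') := by rw [mul_assoc]
            _ = n' * (m' * n) := by rw [comm n hn m' hm']
            _ = (n' * m') * n := by rw [mul_assoc]
            _ = (Pi.mulSingle j b, 1) * n := by rw [← hh]
          have := congrArg (fun z : (∀ i, Gf i) × A => z.1 j) e3
          simpa using this.symm
        rw [hz j, Subgroup.mem_bot] at hcen
        exact hcen
      have hmFi : m ∈ Fi := by
        intro j hj
        have hj' : j ≠ i := by simpa using hj
        have := congrArg (fun z : (∀ i, Gf i) × A => z.1 j) hg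
        simp only [Prod.fst_mul, Pi.mul_apply] at this
        rw [Pi.mulSingle_eq_of_ne hj', hnFi j hj, one_mul] at this
        exact this.symm
      exact ⟨n, ⟨hn, hnFi⟩, m, ⟨hm, hmFi⟩, hg⟩
    -- the two images in Gf i
    set K := Subgroup.map π (N ⊓ Fi) with hKdef
    set L := Subgroup.map π (M ⊓ Fi) with hLdef
    have hKn : K.Normal := Subgroup.Normal.map inferInstance π hπ
    have hLn : L.Normal := Subgroup.Normal.map inferInstance π hπ
    have hKLinf : K ⊓ L = ⊥ := by
      rw [eq_bot_iff]
      rintro a ⟨⟨x, hx, hxa⟩, ⟨y, hy, hya⟩⟩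
      have hxy : x * y⁻¹ ∈ N := by
        apply hZ
        funext j
        by_cases hji : j = i
        · subst hji
          simp only [Prod.fst_mul, Pi.mul_apply, Prod.fst_inv, Pi.inv_apply]
          have : x.1 j = y.1 j := by
            have h1 : π x = π y := by rw [hxa, hya]
            simpa [hπdef] using h1
          rw [this]; simp
        · simp only [Prod.fst_mul, Pi.mul_apply, Prod.fst_inv, Pi.inv_apply]
          rw [hx.2 j (by simpa using hji), hy.2 j (by simpa using hji)]
          simp
      have hyN : y ∈ N := by
        have : y = (x * y⁻¹)⁻¹ * x := by group
        rw [this]; exact mul_mem (inv_mem hxy) hx.1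
      have : y ∈ N ⊓ M := ⟨hyN, hy.1⟩
      rw [hinf, Subgroup.mem_bot] at this
      rw [Subgroup.mem_bot, ← hya, this, map_one]
    have hKLsup : K ⊔ L = ⊤ := by
      rw [eq_top_iff]
      intro a _
      obtain ⟨n, hn, m, hm, hg⟩ := main_decomp a
      have : a = π n * π m := by
        have := congrArg π hg
        simpa [hπdef] using this
      rw [this]
      exact mul_mem (Subgroup.mem_sup_left ⟨n, hn, rfl⟩)
        (Subgroup.mem_sup_right ⟨m, hm, rfl⟩)
    rcases (hind i).2 K L hKn hLn hKLinf hKLsup with hK | hL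
    · -- K = ⊥ : every element of N has trivial i-th coordinate
      right
      intro n hn
      have hcen : n.1 i ∈ Subgroup.center (Gf i) := by
        rw [Subgroup.mem_center_iff]
        intro b
        set g : (∀ i, Gf i) × A := (Pi.mulSingle i b, 1) with hgdef
        set c := n * g * n⁻¹ * g⁻¹ with hcdef
        have hcN : c ∈ N := by
          have : n * (g * n⁻¹ * g⁻¹) ∈ N := mul_mem hn (hN.conj_mem _ (inv_mem hn) g)
          simpa [hcdef, mul_assoc] using this
        have hcFi : c ∈ Fi := by
          intro j hj
          have hj' : j ≠ i := by simpa using hj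
          simp [hcdef, hgdef, Pi.mulSingle_eq_of_ne hj']
        have : π c ∈ K := ⟨c, ⟨hcN, hcFi⟩, rfl⟩
        rw [hK, Subgroup.mem_bot] at this
        have hc1 : n.1 i * b * (n.1 i)⁻¹ * b⁻¹ = 1 := by
          simpa [hπdef, hcdef, hgdef] using this
        calc b * n.1 i = (n.1 i * b * (n.1 i)⁻¹ * b⁻¹)⁻¹ * (n.1 i * b) := by group
        _ = n.1 i * b := by rw [hc1]; group
      rw [hz i, Subgroup.mem_bot] at hcen
      exact hcen
    · -- L = ⊥ : all mulSingle elements lie in N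
      left
      intro a
      obtain ⟨n, hn, m, hm, hg⟩ := main_decomp a
      have hmi : m.1 i = 1 := by
        have : π m ∈ L := ⟨m, hm, rfl⟩
        rw [hL, Subgroup.mem_bot] at this
        simpa [hπdef] using this
      have hm1 : m.1 = 1 := by
        funext j
        by_cases hji : j = i
        · subst hji; exact hmi
        · exact hm.2 j (by simpa using hji)
      have : m ∈ N ⊓ M := ⟨hZ m hm1, hm.1⟩
      rw [hinf, Subgroup.mem_bot] at this
      rw [hg, this, mul_one]
      exact hn.1
  -- conclude
  ext x
  constructor
  · intro hx i hi
    simp only [Set.mem_setOf_eq] at hi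
    rcases key i with h | h
    · exact absurd h hi
    · exact h x hx
  · intro hx
    have h2 : (((1 : ∀ i, Gf i), x.2) : (∀ i, Gf i) × A) ∈ N := hZ _ rfl
    have main : ∀ (T : Finset (Fin k)) (f : ∀ i, Gf i),
        (∀ i, f i ≠ 1 → i ∈ T ∧ (∀ a : Gf i, ((Pi.mulSingle i a, 1) : (∀ i, Gf i) × A) ∈ N)) →
        ((f, (1 : A)) : (∀ i, Gf i) × A) ∈ N := by
      intro T
      induction T using Finset.induction_on with
      | empty =>
        intro f hf
        have hf1 : f = 1 := by
          funext i
          by_contra h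
          simpa using (hf i h).1
        rw [hf1]
        exact one_mem N
      | @insert a T haT ih =>
        intro f hf
        have hsplit : ((f, (1 : A)) : (∀ i, Gf i) × A)
            = (Pi.mulSingle a (f a), 1) * (Function.update f a 1, 1) := by
          refine Prod.ext ?_ (by simp)
          funext j
          simp only [Prod.fst_mul, Pi.mul_apply]
          by_cases hja : j = a
          · subst hja; simp
          · simp [Pi.mulSingle_eq_of_ne hja, Function.update_of_ne hja]
        rw [hsplit]
        refine mul_mem ?_ (ih _ ?_)
        · by_cases hfa : f a = 1
          · rw [hfa]
            simp only [Pi.mulSingle_one]; exact one_mem N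
          · exact (hf a hfa).2 (f a)
        · intro i hi
          have hne : i ≠ a := by
            intro h; subst h; simp at hi
          rw [Function.update_of_ne hne] at hi
          obtain ⟨h1, h3⟩ := hf i hi
          refine ⟨?_, h3⟩
          rcases Finset.mem_insert.mp h1 with h | h
          · exact absurd h hne
          · exact h
    have h1 : ((x.1, (1 : A)) : (∀ i, Gf i) × A) ∈ N := by
      apply main Finset.univ x.1
      intro i hi
      refine ⟨Finset.mem_univ i, ?_⟩
      by_contra hcon
      exact hi (hx i hcon)
    have h3 := mul_mem h1 h2
    have h4 : ((x.1, (1 : A)) : (∀ i, Gf i) × A) * ((1 : ∀ i, Gf i), x.2) = x := by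
      refine Prod.ext ?_ ?_ <;> simp
    rwa [h4] at h3

end Aux

/-- The subgroup `⟨G_j, A⟩` of `G₁ × ⋯ × G_k × A`: elements whose `i`-th coordinates
vanish for all `i ≠ j`. -/
def factorWithCenter {k : ℕ} (Gf : Fin k → Type*) [∀ i, Group (Gf i)]
    (A : Type*) [CommGroup A] (j : Fin k) : Subgroup ((∀ i, Gf i) × A) where
  carrier := {x | ∀ i, i ≠ j → x.1 i = 1}
  one_mem' := by intro i _; rfl
  mul_mem' := by
    intro x y hx hy i hi
    simp only [Prod.fst_mul, Pi.mul_apply, hx i hi, hy i hi, one_mul]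
  inv_mem' := by
    intro x hx i hi
    simp only [Prod.fst_inv, Pi.inv_apply, hx i hi, inv_one]

section Aux2

variable {k : ℕ} {Gf : Fin k → Type*} [∀ i, Group (Gf i)] {A : Type*} [CommGroup A]

lemma central_iff (hz : ∀ i, Subgroup.center (Gf i) = ⊥) (x : (∀ i, Gf i) × A) :
    x ∈ Subgroup.center ((∀ i, Gf i) × A) ↔ x.1 = 1 := by
  constructor
  · intro hx
    funext i
    have h0 : x.1 i ∈ Subgroup.center (Gf i) := by
      rw [Subgroup.mem_center_iff]
      intro b
      have := Subgroup.mem_center_iff.mp hx ((Pi.mulSingle i b, 1) : (∀ i, Gf i) × A)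
      have h1 := congrArg (fun z : (∀ i, Gf i) × A => z.1 i) this
      simpa [Pi.mulSingle_eq_same] using h1
    rw [hz i] at h0
    simpa using h0
  · intro hx
    rw [Subgroup.mem_center_iff]
    intro g
    refine Prod.ext ?_ ?_
    · simp [hx]
    · simp [mul_comm]

/-- central elements keep trivial first component under any automorphism -/
lemma central_map (hz : ∀ i, Subgroup.center (Gf i) = ⊥) (ψ : MulAut ((∀ i, Gf i) × A))
    (x : (∀ i, Gf i) × A) (hx : x.1 = 1) : (ψ x).1 = 1 := by
  rw [← central_iff hz]
  rw [Subgroup.mem_center_iff]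
  intro g
  have h1 := Subgroup.mem_center_iff.mp ((central_iff hz x).mpr hx) (ψ.symm g)
  have h2 := congrArg ψ h1
  simpa using h2

/-- the complement of `factorWithCenter j` -/
def Dgrp (Gf : Fin k → Type*) [∀ i, Group (Gf i)] (A : Type*) [CommGroup A]
    (j : Fin k) : Subgroup ((∀ i, Gf i) × A) where
  carrier := {x | x.1 j = 1 ∧ x.2 = 1}
  one_mem' := ⟨rfl, rfl⟩
  mul_mem' := by
    rintro x y ⟨hx1, hx2⟩ ⟨hy1, hy2⟩
    exact ⟨by simp [hx1, hy1], by simp [hx2, hy2]⟩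
  inv_mem' := by
    rintro x ⟨hx1, hx2⟩
    exact ⟨by simp [hx1], by simp [hx2]⟩

lemma factorWithCenter_eq_bigF (j : Fin k) :
    factorWithCenter Gf A j = bigF Gf A {j} := rfl

lemma factorWithCenter_normal (j : Fin k) : (factorWithCenter Gf A j).Normal := by
  rw [factorWithCenter_eq_bigF]; exact bigF_normal _

lemma Dgrp_normal (j : Fin k) : (Dgrp Gf A j).Normal := by
  constructor
  rintro x ⟨hx1, hx2⟩ g
  constructor
  · simp only [Prod.fst_mul, Pi.mul_apply, Prod.fst_inv, Pi.inv_apply, hx1]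
    group
  · simp only [Prod.snd_mul, Prod.snd_inv, hx2]
    group

lemma factor_inf_Dgrp (j : Fin k) : factorWithCenter Gf A j ⊓ Dgrp Gf A j = ⊥ := by
  rw [eq_bot_iff]
  rintro x hx
  obtain ⟨hx1, hx2, hx3⟩ := Subgroup.mem_inf.mp hx
  rw [Subgroup.mem_bot]
  refine Prod.ext ?_ hx3
  funext i
  by_cases hij : i = j
  · subst hij; exact hx2
  · exact hx1 i hij

lemma factor_sup_Dgrp (j : Fin k) : factorWithCenter Gf A j ⊔ Dgrp Gf A j = ⊤ := by
  rw [eq_top_iff]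
  intro x _
  have hu : ((Pi.mulSingle j (x.1 j), x.2) : (∀ i, Gf i) × A) ∈ factorWithCenter Gf A j := by
    intro i hi
    exact Pi.mulSingle_eq_of_ne hi _
  have hv : (((Pi.mulSingle j (x.1 j))⁻¹ * x.1, 1) : (∀ i, Gf i) × A) ∈ Dgrp Gf A j := by
    refine ⟨?_, rfl⟩
    simp [Pi.mulSingle_eq_same]
  have hx : x = (Pi.mulSingle j (x.1 j), x.2) * ((Pi.mulSingle j (x.1 j))⁻¹ * x.1, 1) := by
    refine Prod.ext ?_ (by simp)
    simp [← mul_assoc]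
  rw [hx]
  exact mul_mem (Subgroup.mem_sup_left hu) (Subgroup.mem_sup_right hv)

end Aux2

/-- If `G = G₁ × ⋯ × G_k × A` with each `Gᵢ` nontrivial, directly indecomposable and
centreless, and `A` abelian, then every automorphism of `G` permutes the subgroups `⟨Gᵢ, A⟩`. -/
theorem aut_permutes_factors {k : ℕ} (Gf : Fin k → Type*) [∀ i, Group (Gf i)]
    (A : Type*) [CommGroup A]
    (hind : ∀ i, DirectlyIndecomposable (Gf i))
    (hz : ∀ i, Subgroup.center (Gf i) = ⊥)
    (φ : MulAut ((∀ i, Gf i) × A)) :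
    ∃ σ : Equiv.Perm (Fin k), ∀ j : Fin k,
      Subgroup.map φ.toMonoidHom (factorWithCenter Gf A j) = factorWithCenter Gf A (σ j) := by
  classical
  set Sset : Fin k → Set (Fin k) := fun j =>
    {i | ∀ a : Gf i, ((Pi.mulSingle i a, 1) : (∀ i, Gf i) × A)
      ∈ Subgroup.map φ.toMonoidHom (factorWithCenter Gf A j)} with hSsetdef
  have hSj : ∀ j : Fin k,
      Subgroup.map φ.toMonoidHom (factorWithCenter Gf A j) = bigF Gf A (Sset j) := by
    intro j
    apply factor_eq_bigF hind hz _ (Subgroup.map φ.toMonoidHom (Dgrp Gf A j))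
    · exact (factorWithCenter_normal j).map _ φ.surjective
    · exact (Dgrp_normal j).map _ φ.surjective
    · rw [← Subgroup.map_inf _ _ _ φ.injective, factor_inf_Dgrp, Subgroup.map_bot]
    · rw [← Subgroup.map_sup, factor_sup_Dgrp, Subgroup.map_top_of_surjective _ φ.surjective]
    · intro x hx
      have hy : (φ.symm x).1 = 1 := central_map hz φ.symm x hx
      refine ⟨φ.symm x, ?_, by simp⟩
      intro i _
      rw [hy]; rfl
  -- each Sset j is nonempty
  have hne : ∀ j : Fin k, ∃ i, i ∈ Sset j := by
    intro j
    by_contra hcon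
    push_neg at hcon
    haveI := (hind j).1
    obtain ⟨a, ha⟩ := exists_ne (1 : Gf j)
    have hmem : ((Pi.mulSingle j a, 1) : (∀ i, Gf i) × A) ∈ factorWithCenter Gf A j :=
      fun i hi => Pi.mulSingle_eq_of_ne hi a
    have h1 : φ (Pi.mulSingle j a, 1) ∈ bigF Gf A (Sset j) := by
      rw [← hSj j]
      exact ⟨_, hmem, rfl⟩
    have h2 : (φ ((Pi.mulSingle j a, 1) : (∀ i, Gf i) × A)).1 = 1 :=
      funext fun i => h1 i (hcon i)
    have h3 : ((Pi.mulSingle j a, (1:A)) : (∀ i, Gf i) × A).1 = 1 := by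
      have := central_map hz φ.symm _ h2
      simpa using this
    exact ha (by simpa using congrFun h3 j)
  -- the sets are pairwise disjoint
  have hdisj : ∀ j j' : Fin k, j ≠ j' → ∀ i, i ∈ Sset j → i ∈ Sset j' → False := by
    intro j j' hjj' i hi hi'
    haveI := (hind i).1
    obtain ⟨a, ha⟩ := exists_ne (1 : Gf i)
    obtain ⟨y, hy, hya⟩ := hi a
    obtain ⟨y', hy', hya'⟩ := hi' a
    have hyy : y = y' := φ.injective (by rw [show φ y = φ.toMonoidHom y from rfl, hya,
      show φ y' = φ.toMonoidHom y' from rfl, hya'])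
    have hy1 : y.1 = 1 := by
      funext i₀
      by_cases h : i₀ = j
      · subst h
        exact hyy ▸ hy' _ (fun hc => hjj' hc)
      · exact hy i₀ h
    have h2 : ((Pi.mulSingle i a, (1:A)) : (∀ i, Gf i) × A).1 = 1 := by
      rw [← hya]
      exact central_map hz φ y hy1
    exact ha (by simpa using congrFun h2 i)
  -- build the permutation
  set σf : Fin k → Fin k := fun j => (hne j).choose with hσdef
  have hσmem : ∀ j, σf j ∈ Sset j := fun j => (hne j).choose_spec
  have hinj : Function.Injective σf := by
    intro j j' h
    by_contra hne'
    exact hdisj j j' hne' (σf j) (hσmem j) (h ▸ hσmem j')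
  have hbij := Finite.injective_iff_bijective.mp hinj
  refine ⟨Equiv.ofBijective σf hbij, ?_⟩
  intro j
  have hSet : Sset j = {σf j} := by
    rw [Set.eq_singleton_iff_unique_mem]
    refine ⟨hσmem j, ?_⟩
    intro i hi
    obtain ⟨j'', hj''⟩ := hbij.2 i
    rcases eq_or_ne j'' j with h | h
    · rw [← hj'', h]
    · exact absurd (hσmem j'') (fun hc => hdisj j j'' (Ne.symm h) i hi (hj'' ▸ hc))
  have : (Equiv.ofBijective σf hbij) j = σf j := rfl
  rw [this, hSj j, hSet, factorWithCenter_eq_bigF]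
end

section
/- Let φ ∈ GL_k(ℤ) ⊆ GL_k(ℂ) and a ∈ ℤᵏ \ {0}. Then there exist p ∈ ℕ and μ ∈ ℂ with |μ| ≥ 1 such that the sequence n ↦ ‖φⁿ(a)‖ (Euclidean or word-length norm on ℤᵏ) is bi-Lipschitz equivalent to n ↦ nᵖ·|μ|ⁿ, and μ is an eigenvalue of φ with a Jordan block of dimension p+1. -/
open Module Filter Finset


-- high powers kill
lemma aux_highpow {V : Type*} [AddCommGroup V] [Module ℂ V] (N : Module.End ℂ V) (x : V)
    (D : ℕ) (h : (N ^ D) x = 0) : ∀ q, D ≤ q → (N ^ q) x = 0 := by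
  intro q hq
  rw [← Nat.sub_add_cancel hq, pow_add, Module.End.mul_apply, h, map_zero]

lemma aux_span_nilpotent {V : Type*} [AddCommGroup V] [Module ℂ V] (N : Module.End ℂ V)
    (x : V) (p : ℕ) (h1 : (N ^ (p + 1)) x = 0) (h2 : (N ^ p) x ≠ 0) :
    (N ^ p) x ∉ Submodule.span ℂ (Set.range fun m : Fin p => (N ^ (m : ℕ)) x) := by
  intro hmem
  rw [Finsupp.mem_span_range_iff_exists_finsupp] at hmem
  obtain ⟨c, hc⟩ := hmem
  have hker := aux_highpow N x (p + 1) h1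
  by_cases hall : ∀ m : Fin p, c m = 0
  · rw [Finsupp.sum_congr (g2 := fun _ _ => (0 : V)) (by intro m _; rw [hall m, zero_smul])] at hc
    simp [Finsupp.sum] at hc
    exact h2 hc.symm
  · push_neg at hall
    obtain ⟨m0, hm0⟩ := hall
    have hs : (c.support).Nonempty := ⟨m0, Finsupp.mem_support_iff.2 hm0⟩
    set j0 := c.support.min' hs with hj0
    have hj0mem : j0 ∈ c.support := c.support.min'_mem hs
    have hcj0 : c j0 ≠ 0 := Finsupp.mem_support_iff.1 hj0mem
    have happ := congrArg (fun y => (N ^ (p - (j0 : ℕ))) y) hc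
    simp only [Finsupp.sum, map_sum, map_smul] at happ
    have hrw : ∀ m ∈ c.support,
        c m • (N ^ (p - (j0 : ℕ))) ((N ^ (m : ℕ)) x)
          = if m = j0 then c j0 • (N ^ p) x else 0 := by
      intro m hm
      rcases eq_or_ne m j0 with rfl | hne
      · rw [if_pos rfl]
        rw [← Module.End.mul_apply, ← pow_add]
        have hlt : ((c.support.min' hs : Fin p) : ℕ) < p := (c.support.min' hs).isLt
        congr 2
        rw [Nat.sub_add_cancel (le_of_lt hlt)]
      · rw [if_neg hne]
        have hj0le : (j0 : ℕ) < (m : ℕ) := by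
          have := c.support.min'_le m hm
          rw [← hj0] at this
          have : (j0 : Fin p) ≤ m := this
          rcases lt_or_eq_of_le this with h | h
          · exact_mod_cast h
          · exact absurd (Fin.ext_iff.mpr (congrArg Fin.val h)).symm hne
        rw [← Module.End.mul_apply, ← pow_add]
        rw [aux_highpow N x (p+1) h1 _ (by omega), smul_zero]
    rw [Finset.sum_congr rfl hrw, Finset.sum_ite_eq' c.support j0 (fun _ => c j0 • (N ^ p) x),
      if_pos hj0mem] at happ
    have : (N ^ (p - (j0:ℕ))) ((N ^ p) x) = 0 := by
      rw [← Module.End.mul_apply, ← pow_add]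
      exact aux_highpow N x (p+1) h1 _ (by omega)
    rw [this] at happ
    rcases smul_eq_zero.1 happ with h | h
    · exact hcj0 h
    · exact h2 h

lemma aux_expand {V : Type*} [AddCommGroup V] [Module ℂ V] (A : Module.End ℂ V) (μ : ℂ)
    (x : V) (D n : ℕ) (hD : ((A - μ • 1) ^ D) x = 0) (hn : D ≤ n + 1) :
    (A ^ n) x = ∑ m ∈ Finset.range D,
      (n.choose m : ℂ) • μ ^ (n - m) • ((A - μ • 1) ^ m) x := by
  set N : Module.End ℂ V := A - μ • 1 with hN
  have hA : A = N + μ • 1 := by rw [hN]; abel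
  have hcomm : Commute N (μ • (1 : Module.End ℂ V)) := (Commute.one_right N).smul_right μ
  have happ : ((N + μ • 1) ^ n) x
      = ∑ m ∈ Finset.range (n + 1), (n.choose m : ℂ) • μ ^ (n - m) • (N ^ m) x := by
    rw [hcomm.add_pow n, LinearMap.sum_apply]
    refine Finset.sum_congr rfl fun m hm => ?_
    rw [smul_pow, one_pow, Module.End.mul_apply, Module.End.mul_apply, Module.End.natCast_apply,
      LinearMap.map_smul_of_tower, LinearMap.smul_apply]
    simp only [Module.End.one_apply, map_smul, map_nsmul, Nat.cast_smul_eq_nsmul ℂ]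
  rw [hA, happ]
  rw [Finset.sum_subset (Finset.range_subset_range.2 hn)]
  intro m hm1 hm2
  simp only [Finset.mem_range] at hm1 hm2
  have : (N ^ m) x = 0 := by
    rw [← Nat.sub_add_cancel (by omega : D ≤ m), pow_add, Module.End.mul_apply, hD, map_zero]
  rw [this, smul_zero, smul_zero]

lemma aux_eventually_bound {f g : ℕ → ℝ} (hg : ∀ n, 1 ≤ n → 0 < g n)
    (h : ∃ C : ℝ, ∀ᶠ n in Filter.atTop, f n ≤ C * g n) :
    ∃ C : ℝ, 0 < C ∧ ∀ n, 1 ≤ n → f n ≤ C * g n := by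
  obtain ⟨C, h⟩ := h
  rw [Filter.eventually_atTop] at h
  obtain ⟨N, hN⟩ := h
  have claim : ∀ M : ℕ, ∀ C : ℝ, (∀ n, 1 ≤ n → M ≤ n → f n ≤ C * g n) →
      ∃ C' : ℝ, 0 < C' ∧ ∀ n, 1 ≤ n → f n ≤ C' * g n := by
    intro M
    induction M with
    | zero =>
      intro C h
      exact ⟨max C 1, lt_of_lt_of_le one_pos (le_max_right _ _), fun n hn =>
        (h n hn (Nat.zero_le n)).trans
          (mul_le_mul_of_nonneg_right (le_max_left _ _) (hg n hn).le)⟩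
    | succ M ih =>
      intro C h
      refine ih (max C (f M / g M)) fun n hn hMn => ?_
      rcases eq_or_lt_of_le hMn with heq | hlt
      · subst heq
        have hgn := hg M hn
        calc f M = (f M / g M) * g M := by field_simp
        _ ≤ max C (f M / g M) * g M :=
            mul_le_mul_of_nonneg_right (le_max_right _ _) hgn.le
      · exact (h n hn hlt).trans
          (mul_le_mul_of_nonneg_right (le_max_left _ _) (hg n hn).le)
  exact claim N C fun n _ hn => hN n hn

lemma aux_toLin'_pow {k : ℕ} (M : Matrix (Fin k) (Fin k) ℂ) (n : ℕ) :
    Matrix.toLin' (M ^ n) = (Matrix.toLin' M) ^ n := by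
  induction n with
  | zero => rw [pow_zero, pow_zero, Matrix.toLin'_one]; rfl
  | succ n ih => rw [pow_succ, pow_succ, Matrix.toLin'_mul, ih]; rfl

lemma aux_norm_bridge {k : ℕ} (x : Fin k → ℤ) :
    ‖(fun i => ((x i : ℤ) : ℝ))‖ = ‖(fun i => ((x i : ℤ) : ℂ))‖ := by
  rw [Pi.norm_def, Pi.norm_def]
  congr 1
  refine Finset.sup_congr rfl fun i _ => ?_
  simp [nnnorm]

lemma aux_one_le_norm {k : ℕ} (x : Fin k → ℤ) (hx : x ≠ 0) :
    1 ≤ ‖(fun i => ((x i : ℤ) : ℂ))‖ := by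
  obtain ⟨i, hi⟩ : ∃ i, x i ≠ 0 := by
    by_contra h; push_neg at h; exact hx (funext h)
  calc (1 : ℝ) ≤ ‖((x i : ℤ) : ℂ)‖ := by
        rw [Complex.norm_intCast]
        exact_mod_cast Int.one_le_abs hi
  _ ≤ ‖(fun i => ((x i : ℤ) : ℂ))‖ := norm_le_pi_norm (fun j => ((x j : ℤ) : ℂ)) i

lemma aux_mulVec_cast {k : ℕ} (P : Matrix (Fin k) (Fin k) ℤ) (a : Fin k → ℤ) :
    (fun i => ((P.mulVec a i : ℤ) : ℂ)) = (P.map (Int.cast : ℤ → ℂ)).mulVec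
      (fun i => ((a i : ℤ) : ℂ)) := by
  funext i
  simp [Matrix.mulVec, dotProduct, Matrix.map_apply]

lemma aux_GL_pow {k : ℕ} (φ : GL (Fin k) ℤ) (n : ℕ) :
    (((φ ^ n : GL (Fin k) ℤ) : Matrix (Fin k) (Fin k) ℤ)).map (Int.cast : ℤ → ℂ)
      = (((φ : Matrix (Fin k) (Fin k) ℤ)).map (Int.cast : ℤ → ℂ)) ^ n := by
  rw [Units.val_pow_eq_pow_val]
  have : ∀ (Q : Matrix (Fin k) (Fin k) ℤ) (n : ℕ),
      (Q ^ n).map (Int.cast : ℤ → ℂ) = (Q.map (Int.cast : ℤ → ℂ)) ^ n := by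
    intro Q n
    have h1 : ∀ R : Matrix (Fin k) (Fin k) ℤ,
        R.map (Int.cast : ℤ → ℂ) = (Int.castRingHom ℂ).mapMatrix R := fun _ => rfl
    rw [h1, h1, map_pow]
  exact this _ n

/-- Growth of orbits of integer matrices: for `φ ∈ GL_k(ℤ)` and `a ∈ ℤᵏ \ {0}`, there are
`p ∈ ℕ` and an eigenvalue `μ ∈ ℂ` of `φ` with `|μ| ≥ 1`, with a Jordan block of dimension
`p + 1`, such that `‖φⁿ(a)‖ ~ nᵖ·|μ|ⁿ`. -/
theorem integer_matrix_orbit_growth {k : ℕ} (φ : GL (Fin k) ℤ) (a : Fin k → ℤ) (ha : a ≠ 0) :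
    ∃ (p : ℕ) (μ : ℂ), 1 ≤ ‖μ‖ ∧
      (∃ C : ℝ, 0 < C ∧ ∀ n : ℕ, 1 ≤ n →
        ‖(fun i => ((((φ ^ n : GL (Fin k) ℤ) : Matrix (Fin k) (Fin k) ℤ).mulVec a i : ℤ) : ℝ))‖
            ≤ C * (n : ℝ) ^ p * ‖μ‖ ^ n ∧
        (n : ℝ) ^ p * ‖μ‖ ^ n ≤
          C * ‖(fun i =>
            ((((φ ^ n : GL (Fin k) ℤ) : Matrix (Fin k) (Fin k) ℤ).mulVec a i : ℤ) : ℝ))‖) ∧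
      Module.End.HasEigenvalue
        (Matrix.toLin' (((φ : Matrix (Fin k) (Fin k) ℤ)).map (Int.cast : ℤ → ℂ))) μ ∧
      LinearMap.ker (Matrix.toLin'
          ((((φ : Matrix (Fin k) (Fin k) ℤ)).map (Int.cast : ℤ → ℂ) - μ • 1) ^ (p + 1))) ≠
        LinearMap.ker (Matrix.toLin'
          ((((φ : Matrix (Fin k) (Fin k) ℤ)).map (Int.cast : ℤ → ℂ) - μ • 1) ^ p)) := by
  classical
  set M : Matrix (Fin k) (Fin k) ℂ :=
    ((φ : Matrix (Fin k) (Fin k) ℤ)).map (Int.cast : ℤ → ℂ) with hM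
  set A : Module.End ℂ (Fin k → ℂ) := Matrix.toLin' M with hA
  set v : Fin k → ℂ := fun i => ((a i : ℤ) : ℂ) with hv
  have hv0 : v ≠ 0 := by
    intro h
    apply ha
    funext i
    have := congrFun h i
    simpa [hv] using this
  -- orbit description
  have hAn : ∀ n : ℕ,
      (fun i => ((((φ ^ n : GL (Fin k) ℤ) : Matrix (Fin k) (Fin k) ℤ).mulVec a i : ℤ) : ℂ))
        = (A ^ n) v := by
    intro n
    rw [aux_mulVec_cast, aux_GL_pow, hA, ← aux_toLin'_pow, Matrix.toLin'_apply]
  set g : ℕ → ℝ := fun n => ‖(A ^ n) v‖ with hgdef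
  -- the orbit is nonzero
  have horb : ∀ n : ℕ, ((φ ^ n : GL (Fin k) ℤ) : Matrix (Fin k) (Fin k) ℤ).mulVec a ≠ 0 := by
    intro n h0
    apply ha
    have h1 : (((φ ^ n)⁻¹ : GL (Fin k) ℤ) : Matrix (Fin k) (Fin k) ℤ).mulVec
        (((φ ^ n : GL (Fin k) ℤ) : Matrix (Fin k) (Fin k) ℤ).mulVec a) = a := by
      rw [Matrix.mulVec_mulVec, ← Units.val_mul, inv_mul_cancel, Units.val_one, Matrix.one_mulVec]
    rw [h0, Matrix.mulVec_zero] at h1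
    exact h1.symm
  have hg1 : ∀ n, 1 ≤ g n := by
    intro n
    rw [hgdef]
    simp only
    rw [← hAn n]
    exact aux_one_le_norm _ (horb n)
  have hnorm : ∀ n : ℕ,
      ‖(fun i => ((((φ ^ n : GL (Fin k) ℤ) : Matrix (Fin k) (Fin k) ℤ).mulVec a i : ℤ) : ℝ))‖
        = g n := by
    intro n
    rw [aux_norm_bridge, hAn n]
  -- generalized eigenspace decomposition
  have hvmem : v ∈ ⨆ μ : ℂ, A.maxGenEigenspace μ := by
    rw [Module.End.iSup_maxGenEigenspace_eq_top A]
    trivial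
  rw [Submodule.mem_iSup_iff_exists_finsupp] at hvmem
  obtain ⟨c, hcmem, hcsum⟩ := hvmem
  set T := c.support with hT
  have hvsum : v = ∑ μ ∈ T, c μ := by rw [← hcsum]; rfl
  have hTne : T.Nonempty := by
    rcases Finset.eq_empty_or_nonempty T with h | h
    · exfalso
      apply hv0
      rw [hvsum, h, Finset.sum_empty]
    · exact h
  have hex : ∀ μ : ℂ, ∃ l : ℕ, ((A - μ • 1) ^ l) (c μ) = 0 := fun μ =>
    (Module.End.mem_maxGenEigenspace A μ (c μ)).1 (hcmem μ)
  set D : ℂ → ℕ := fun μ => Nat.find (hex μ) with hD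
  have hDz : ∀ μ, ((A - μ • 1) ^ (D μ)) (c μ) = 0 := fun μ => Nat.find_spec (hex μ)
  have hD0 : ∀ μ ∈ T, 0 < D μ := by
    intro μ hμ
    rcases Nat.eq_zero_or_pos (D μ) with h | h
    · exfalso
      have := hDz μ
      rw [hD] at h
      rw [hD, h, pow_zero, Module.End.one_apply] at this
      exact Finsupp.mem_support_iff.1 hμ this
    · exact h
  have hDnz : ∀ μ ∈ T, ((A - μ • 1) ^ (D μ - 1)) (c μ) ≠ 0 := by
    intro μ hμ
    have h1 : D μ - 1 < D μ := by have := hD0 μ hμ; omega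
    exact Nat.find_min (hex μ) h1
  have hDle : ∀ μ, D μ ≤ k := by
    intro μ
    apply Nat.find_le
    have h1 : c μ ∈ A.genEigenspace μ (Module.finrank ℂ (Fin k → ℂ)) := by
      rw [← Module.End.maxGenEigenspace_eq_genEigenspace_finrank]
      exact hcmem μ
    have h2 : Module.finrank ℂ (Fin k → ℂ) = k := by
      rw [Module.finrank_fintype_fun_eq_card, Fintype.card_fin]
    rw [h2] at h1
    rw [Module.End.mem_genEigenspace_nat] at h1
    exact h1
  -- injectivity
  have hMinv : (((φ⁻¹ : GL (Fin k) ℤ) : Matrix (Fin k) (Fin k) ℤ)).map (Int.cast : ℤ → ℂ) * M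
      = 1 := by
    rw [hM]
    have h1 : ∀ P : Matrix (Fin k) (Fin k) ℤ,
        P.map (Int.cast : ℤ → ℂ) = (Int.castRingHom ℂ).mapMatrix P := fun _ => rfl
    rw [h1, h1, ← map_mul, ← Units.val_mul, inv_mul_cancel, Units.val_one, map_one]
  have hinj : Function.Injective A := by
    intro x y hxy
    have h2 := congrArg
      (Matrix.toLin' ((((φ⁻¹ : GL (Fin k) ℤ) : Matrix (Fin k) (Fin k) ℤ)).map
        (Int.cast : ℤ → ℂ))) hxy
    rw [hA] at hxy
    have h3 : ∀ z : Fin k → ℂ,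
        Matrix.toLin' ((((φ⁻¹ : GL (Fin k) ℤ) : Matrix (Fin k) (Fin k) ℤ)).map
          (Int.cast : ℤ → ℂ)) (A z) = z := by
      intro z
      rw [hA, ← Matrix.toLin'_mul_apply, hMinv, Matrix.toLin'_one, LinearMap.id_apply]
    rwa [h3 x, h3 y] at h2
  -- eigenvalues
  have heig : ∀ μ ∈ T, Module.End.HasEigenvalue A μ ∧ μ ≠ 0 := by
    intro μ hμ
    set x := ((A - μ • 1) ^ (D μ - 1)) (c μ) with hx
    have hxne : x ≠ 0 := hDnz μ hμ
    have hNx : (A - μ • 1) x = 0 := by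
      rw [hx, ← Module.End.mul_apply, ← pow_succ']
      have h4 : D μ - 1 + 1 = D μ := Nat.succ_pred_eq_of_pos (hD0 μ hμ)
      rw [h4]
      exact hDz μ
    have hAx : A x = μ • x := by
      rw [LinearMap.sub_apply, LinearMap.smul_apply, Module.End.one_apply, sub_eq_zero] at hNx
      exact hNx
    refine ⟨Module.End.hasEigenvalue_of_hasEigenvector
      ⟨Module.End.mem_genEigenspace_one.2 hAx, hxne⟩, ?_⟩
    intro h0
    apply hxne
    apply hinj
    rw [hAx, h0, zero_smul, map_zero]
  -- choice of dominant eigenvalue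
  have hr'mem : (T.image (‖·‖)).max' (hTne.image _) ∈ T.image (‖·‖) :=
    Finset.max'_mem _ _
  set T2 := T.filter (fun μ => ‖μ‖ = (T.image (‖·‖)).max' (hTne.image _))
    with hT2
  have hT2ne : T2.Nonempty := by
    obtain ⟨μ, hμ, habs⟩ := Finset.mem_image.1 hr'mem
    exact ⟨μ, Finset.mem_filter.2 ⟨hμ, habs⟩⟩
  obtain ⟨μ0, hμ0T2, hμ0max⟩ := Finset.exists_max_image T2 D hT2ne
  have hμ0T : μ0 ∈ T := (Finset.mem_filter.1 hμ0T2).1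
  have hμ0abs : ‖μ0‖ = (T.image (‖·‖)).max' (hTne.image _) :=
    (Finset.mem_filter.1 hμ0T2).2
  set p := D μ0 - 1 with hp
  have hDp : D μ0 = p + 1 := (Nat.succ_pred_eq_of_pos (hD0 μ0 hμ0T)).symm
  set r := ‖μ0‖ with hrdef
  have hrpos : 0 < r := norm_pos_iff.2 (heig μ0 hμ0T).2
  have hrmax : ∀ μ ∈ T, ‖μ‖ ≤ r := by
    intro μ hμ
    exact le_trans (Finset.le_max' _ _ (Finset.mem_image_of_mem _ hμ)) (le_of_eq hμ0abs.symm)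
  have hDmax : ∀ μ ∈ T, ‖μ‖ = r → D μ ≤ p + 1 := by
    intro μ hμ habs
    rw [← hDp]
    exact hμ0max μ (Finset.mem_filter.2 ⟨hμ, habs.trans hμ0abs⟩)
  -- invariance of generalized eigenspaces
  have hEmem : ∀ (μ : ℂ) (m : ℕ), ((A - μ • 1) ^ m) (c μ) ∈ A.maxGenEigenspace μ := by
    intro μ m
    rw [Module.End.mem_maxGenEigenspace]
    refine ⟨D μ, ?_⟩
    rw [← Module.End.mul_apply, ← pow_add, add_comm, pow_add, Module.End.mul_apply, hDz,
      map_zero]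
  -- the functional
  set u := ((A - μ0 • 1) ^ p) (c μ0) with hu
  have hune : u ≠ 0 := hDnz μ0 hμ0T
  have hu1 : ((A - μ0 • 1) ^ (p + 1)) (c μ0) = 0 := by rw [← hDp]; exact hDz μ0
  set Wsp := Submodule.span ℂ (Set.range fun m : Fin p => ((A - μ0 • 1) ^ (m : ℕ)) (c μ0))
    with hWsp
  set W := (⨆ μ ∈ T.erase μ0, A.maxGenEigenspace μ) ⊔ Wsp with hW
  have hspanle : Wsp ≤ A.maxGenEigenspace μ0 :=
    Submodule.span_le.2 (by rintro _ ⟨m, rfl⟩; exact hEmem μ0 m)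
  have huW : u ∉ W := by
    intro huW
    rw [hW, Submodule.mem_sup] at huW
    obtain ⟨w, hw, s, hs, hws⟩ := huW
    have hw2 : w ∈ ⨆ μ, ⨆ (_ : μ ≠ μ0), A.maxGenEigenspace μ := by
      have hle : (⨆ μ ∈ T.erase μ0, A.maxGenEigenspace μ)
          ≤ ⨆ μ, ⨆ (_ : μ ≠ μ0), A.maxGenEigenspace μ :=
        iSup₂_le fun μ hμ =>
          le_iSup₂ (f := fun μ (_ : μ ≠ μ0) => A.maxGenEigenspace μ) μ
            (Finset.mem_erase.1 hμ).1
      exact hle hw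
    have hwE : w ∈ A.maxGenEigenspace μ0 := by
      have h5 : w = u - s := by rw [← hws]; abel
      rw [h5]
      exact Submodule.sub_mem _ (hEmem μ0 p) (hspanle hs)
    have hw0 : w = 0 := Submodule.disjoint_def.1
      ((Module.End.independent_maxGenEigenspace A) μ0) w hwE hw2
    have hus : u ∈ Wsp := by rw [← hws, hw0, zero_add]; exact hs
    exact aux_span_nilpotent (A - μ0 • 1) (c μ0) p hu1 hune hus
  obtain ⟨f, hfu, hfWmap⟩ := Submodule.exists_dual_map_eq_bot_of_notMem huW inferInstance
  have hfW0 : ∀ x ∈ W, f x = 0 := by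
    intro x hx
    have h6 : f x ∈ W.map f := Submodule.mem_map_of_mem hx
    rw [hfWmap] at h6
    simpa using h6
  set F := LinearMap.toContinuousLinearMap f with hF
  have hFapp : ∀ x, ‖f x‖ ≤ ‖F‖ * ‖x‖ := by
    intro x
    have h7 := F.le_opNorm x
    rw [hF] at h7
    have h8 : (LinearMap.toContinuousLinearMap f) x = f x := by
      rw [LinearMap.coe_toContinuousLinearMap' f]
    rwa [h8] at h7
  have hfE : ∀ μ ∈ T, μ ≠ μ0 → ∀ m : ℕ, f (((A - μ • 1) ^ m) (c μ)) = 0 := by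
    intro μ hμ hne m
    apply hfW0
    rw [hW]
    apply Submodule.mem_sup_left
    exact (le_iSup₂ (f := fun μ (_ : μ ∈ T.erase μ0) => A.maxGenEigenspace μ) μ
      (Finset.mem_erase.2 ⟨hne, hμ⟩)) (hEmem μ m)
  have hfm : ∀ m : ℕ, m < p → f (((A - μ0 • 1) ^ m) (c μ0)) = 0 := by
    intro m hm
    apply hfW0
    rw [hW]
    apply Submodule.mem_sup_right
    exact Submodule.subset_span ⟨⟨m, hm⟩, rfl⟩
  have hfA : ∀ n : ℕ, k ≤ n → f ((A ^ n) v) = (n.choose p : ℂ) * μ0 ^ (n - p) * f u := by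
    intro n hn
    rw [hvsum, map_sum, map_sum]
    have hterm : ∀ μ ∈ T, f ((A ^ n) (c μ))
        = if μ = μ0 then (n.choose p : ℂ) * μ0 ^ (n - p) * f u else 0 := by
      intro μ hμ
      rw [aux_expand A μ (c μ) (D μ) n (hDz μ) (le_trans (hDle μ) (by omega)), map_sum]
      rcases eq_or_ne μ μ0 with rfl | hne
      · rw [if_pos rfl, hDp, Finset.sum_eq_single p]
        · rw [map_smul, map_smul, smul_eq_mul, smul_eq_mul, ← hu]
          ring
        · intro m hm hmne
          have hmlt : m < p := by
            rw [Finset.mem_range] at hm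
            omega
          rw [map_smul, map_smul, hfm m hmlt, smul_zero, smul_zero]
        · intro hp'
          exact absurd (Finset.self_mem_range_succ p) hp'
      · rw [if_neg hne]
        refine Finset.sum_eq_zero fun m hm => ?_
        rw [map_smul, map_smul, hfE μ hμ hne m, smul_zero, smul_zero]
    rw [Finset.sum_congr rfl hterm, Finset.sum_ite_eq' T μ0 _, if_pos hμ0T]
  -- upper bound, eventually
  have hpair : ∀ (μ : ℂ) (m : ℕ), ∃ Cp : ℝ, 0 ≤ Cp ∧ (μ ∈ T → m < D μ →
      ∀ᶠ n in Filter.atTop,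
        (n.choose m : ℝ) * ‖μ‖ ^ (n - m) * ‖((A - μ • 1) ^ m) (c μ)‖
          ≤ Cp * ((n : ℝ) ^ p * r ^ n)) := by
    intro μ m
    by_cases hcase : μ ∈ T ∧ m < D μ
    swap
    · exact ⟨0, le_rfl, fun h1 h2 => absurd ⟨h1, h2⟩ hcase⟩
    obtain ⟨hμT, hm⟩ := hcase
    set B := ‖((A - μ • 1) ^ m) (c μ)‖ with hB
    have hB0 : 0 ≤ B := norm_nonneg _
    have haμ0 : 0 < ‖μ‖ := norm_pos_iff.2 (heig μ hμT).2
    refine ⟨B / ‖μ‖ ^ m, by positivity, fun _ _ => ?_⟩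
    have hev : ∀ᶠ n : ℕ in Filter.atTop,
        (n : ℝ) ^ m * ‖μ‖ ^ n ≤ (n : ℝ) ^ p * r ^ n := by
      rcases eq_or_lt_of_le (hrmax μ hμT) with heq | hlt
      · have hmp : m ≤ p := by have := hDmax μ hμT heq; omega
        filter_upwards [Filter.eventually_ge_atTop 1] with n hn
        rw [heq]
        apply mul_le_mul_of_nonneg_right _ (by positivity)
        have hn1 : (1 : ℝ) ≤ (n : ℝ) := by exact_mod_cast hn
        exact pow_le_pow_right₀ hn1 hmp
      · have htend := tendsto_pow_const_mul_const_pow_of_lt_one m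
          (div_nonneg haμ0.le hrpos.le) ((div_lt_one hrpos).2 hlt)
        filter_upwards [htend.eventually (gt_mem_nhds one_pos),
          Filter.eventually_ge_atTop 1] with n h1 hn1
        have h2 : (n : ℝ) ^ m * ‖μ‖ ^ n ≤ r ^ n := by
          have h3 := mul_le_mul_of_nonneg_right h1.le (pow_nonneg hrpos.le n)
          rw [one_mul, mul_assoc, ← mul_pow, div_mul_cancel₀ _ (ne_of_gt hrpos)] at h3
          exact h3
        refine h2.trans ?_
        nth_rewrite 1 [← one_mul (r ^ n)]
        apply mul_le_mul_of_nonneg_right _ (by positivity)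
        have hn1' : (1 : ℝ) ≤ (n : ℝ) := by exact_mod_cast hn1
        exact one_le_pow₀ hn1'
    filter_upwards [hev, Filter.eventually_ge_atTop m] with n hn hnm
    have hchoose : (n.choose m : ℝ) ≤ (n : ℝ) ^ m := by
      exact_mod_cast Nat.choose_le_pow n m
    have hsplit : ‖μ‖ ^ (n - m) = ‖μ‖ ^ n / ‖μ‖ ^ m := by
      rw [pow_sub₀ _ (ne_of_gt haμ0) hnm, div_eq_mul_inv]
    calc (n.choose m : ℝ) * ‖μ‖ ^ (n - m) * B
        ≤ (n : ℝ) ^ m * ‖μ‖ ^ (n - m) * B :=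
          mul_le_mul_of_nonneg_right (mul_le_mul_of_nonneg_right hchoose (by positivity)) hB0
      _ = ((n : ℝ) ^ m * ‖μ‖ ^ n) * (B / ‖μ‖ ^ m) := by
          rw [hsplit]; ring
      _ ≤ ((n : ℝ) ^ p * r ^ n) * (B / ‖μ‖ ^ m) :=
          mul_le_mul_of_nonneg_right hn (by positivity)
      _ = (B / ‖μ‖ ^ m) * ((n : ℝ) ^ p * r ^ n) := by ring
  choose Cp hCp0 hCp using hpair
  have hupper : ∃ C : ℝ, ∀ᶠ n in Filter.atTop, g n ≤ C * ((n : ℝ) ^ p * r ^ n) := by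
    refine ⟨∑ μ ∈ T, ∑ m ∈ Finset.range (D μ), Cp μ m, ?_⟩
    have hall : ∀ᶠ n in Filter.atTop, ∀ μ ∈ T, ∀ m ∈ Finset.range (D μ),
        (n.choose m : ℝ) * ‖μ‖ ^ (n - m) * ‖((A - μ • 1) ^ m) (c μ)‖
          ≤ Cp μ m * ((n : ℝ) ^ p * r ^ n) := by
      rw [Filter.eventually_all_finset]
      intro μ hμ
      rw [Filter.eventually_all_finset]
      intro m hm
      exact hCp μ m hμ (Finset.mem_range.1 hm)
    filter_upwards [hall, Filter.eventually_ge_atTop k] with n hn hnk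
    have hgn : g n = ‖∑ μ ∈ T, (A ^ n) (c μ)‖ := by
      rw [hgdef]
      simp only
      rw [hvsum, map_sum]
    rw [hgn]
    calc ‖∑ μ ∈ T, (A ^ n) (c μ)‖ ≤ ∑ μ ∈ T, ‖(A ^ n) (c μ)‖ := norm_sum_le _ _
      _ ≤ ∑ μ ∈ T, ∑ m ∈ Finset.range (D μ),
          (n.choose m : ℝ) * ‖μ‖ ^ (n - m) * ‖((A - μ • 1) ^ m) (c μ)‖ := by
          refine Finset.sum_le_sum fun μ hμ => ?_
          rw [aux_expand A μ (c μ) (D μ) n (hDz μ) (le_trans (hDle μ) (by omega))]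
          refine (norm_sum_le _ _).trans (Finset.sum_le_sum fun m hm => ?_)
          rw [norm_smul, norm_smul, Complex.norm_natCast, norm_pow]
          exact le_of_eq (by ring)
      _ ≤ ∑ μ ∈ T, ∑ m ∈ Finset.range (D μ), Cp μ m * ((n : ℝ) ^ p * r ^ n) :=
          Finset.sum_le_sum fun μ hμ => Finset.sum_le_sum fun m hm => hn μ hμ m hm
      _ = (∑ μ ∈ T, ∑ m ∈ Finset.range (D μ), Cp μ m) * ((n : ℝ) ^ p * r ^ n) := by
          rw [Finset.sum_mul]
          exact Finset.sum_congr rfl fun μ _ => (Finset.sum_mul _ _ _).symm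
  -- the dominant eigenvalue has modulus at least 1
  have hr1 : 1 ≤ r := by
    by_contra hcon
    push_neg at hcon
    obtain ⟨C, hC⟩ := hupper
    have htend : Filter.Tendsto (fun n : ℕ => C * ((n : ℝ) ^ p * r ^ n))
        Filter.atTop (nhds 0) := by
      have h9 := tendsto_pow_const_mul_const_pow_of_lt_one p hrpos.le hcon
      simpa using h9.const_mul C
    obtain ⟨n, h1, h2⟩ := ((htend.eventually (gt_mem_nhds one_pos)).and hC).exists
    exact absurd ((hg1 n).trans h2) (not_le.2 h1)
  -- lower bound, eventually
  have hfu0 : (0 : ℝ) < ‖f u‖ := norm_pos_iff.2 hfu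
  have hlower : ∃ C : ℝ, ∀ᶠ n : ℕ in Filter.atTop, (n : ℝ) ^ p * r ^ n ≤ C * g n := by
    refine ⟨2 ^ p * (p.factorial) * r ^ p * ‖F‖ / ‖f u‖, ?_⟩
    filter_upwards [Filter.eventually_ge_atTop k, Filter.eventually_ge_atTop (2 * p)]
      with n hnk hnp
    have hchoose : (n : ℝ) ^ p ≤ 2 ^ p * p.factorial * (n.choose p : ℝ) := by
      have h1 : (n : ℝ) ^ p ≤ (2 : ℝ) ^ p * (((n + 1 - p : ℕ) : ℝ)) ^ p := by
        have hnat : n ≤ 2 * (n + 1 - p) := by omega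
        have h2 : (n : ℝ) ^ p ≤ (((2 * (n + 1 - p) : ℕ) : ℝ)) ^ p := by
          apply pow_le_pow_left₀ (by positivity)
          exact_mod_cast hnat
        rw [Nat.cast_mul, mul_pow] at h2
        simpa using h2
      have h3 : (((n + 1 - p : ℕ) : ℝ)) ^ p ≤ p.factorial * (n.choose p : ℝ) := by
        have h4 := Nat.pow_le_choose (α := ℝ) p n
        rw [div_le_iff₀ (by positivity : (0:ℝ) < (p.factorial : ℝ))] at h4
        calc (((n + 1 - p : ℕ) : ℝ)) ^ p ≤ (n.choose p : ℝ) * (p.factorial : ℝ) := h4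
          _ = p.factorial * (n.choose p : ℝ) := by ring
      calc (n : ℝ) ^ p ≤ (2 : ℝ) ^ p * (((n + 1 - p : ℕ) : ℝ)) ^ p := h1
        _ ≤ (2 : ℝ) ^ p * (p.factorial * (n.choose p : ℝ)) :=
            mul_le_mul_of_nonneg_left h3 (by positivity)
        _ = 2 ^ p * p.factorial * (n.choose p : ℝ) := by ring
    have hkey : (n.choose p : ℝ) * r ^ (n - p) * ‖f u‖ ≤ ‖F‖ * g n := by
      have h5 := hFapp ((A ^ n) v)
      rw [hfA n hnk] at h5
      rw [norm_mul, norm_mul, Complex.norm_natCast, norm_pow] at h5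
      exact h5
    have hrsplit : r ^ n = r ^ (n - p) * r ^ p := (pow_sub_mul_pow r (by omega : p ≤ n)).symm
    calc (n : ℝ) ^ p * r ^ n ≤ (2 ^ p * p.factorial * (n.choose p : ℝ)) * r ^ n :=
          mul_le_mul_of_nonneg_right hchoose (by positivity)
      _ = (2 ^ p * p.factorial * r ^ p) * ((n.choose p : ℝ) * r ^ (n - p)) := by
          rw [hrsplit]; ring
      _ ≤ (2 ^ p * p.factorial * r ^ p) * (‖F‖ * g n / ‖f u‖) := by
          apply mul_le_mul_of_nonneg_left _ (by positivity)
          rw [le_div_iff₀ hfu0]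
          exact hkey
      _ = 2 ^ p * p.factorial * r ^ p * ‖F‖ / ‖f u‖ * g n := by ring
  -- assemble the constants
  obtain ⟨C1, hC1pos, hC1⟩ := aux_eventually_bound
    (fun n hn => by
      have hn0 : 0 < n := hn
      have hn' : (0 : ℝ) < (n : ℝ) := by exact_mod_cast hn0
      positivity : ∀ n : ℕ, 1 ≤ n → (0:ℝ) < (n : ℝ) ^ p * r ^ n) hupper
  obtain ⟨C2, hC2pos, hC2⟩ := aux_eventually_bound
    (fun n _ => lt_of_lt_of_le one_pos (hg1 n)) hlower
  have hkerEq : ∀ j : ℕ, Matrix.toLin' ((M - μ0 • 1) ^ j) = (A - μ0 • 1) ^ j := by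
    intro j
    rw [aux_toLin'_pow, map_sub, map_smul, Matrix.toLin'_one, hA]
    congr 1
  refine ⟨p, μ0, hr1, ⟨max C1 C2, lt_of_lt_of_le hC1pos (le_max_left _ _), fun n hn => ?_⟩,
    (heig μ0 hμ0T).1, ?_⟩
  · constructor
    · rw [hnorm n]
      calc g n ≤ C1 * ((n : ℝ) ^ p * ‖μ0‖ ^ n) := hC1 n hn
        _ ≤ max C1 C2 * ((n : ℝ) ^ p * ‖μ0‖ ^ n) := by
            apply mul_le_mul_of_nonneg_right (le_max_left _ _)
            positivity
        _ = max C1 C2 * (n : ℝ) ^ p * ‖μ0‖ ^ n := by ring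
    · rw [hnorm n]
      calc (n : ℝ) ^ p * ‖μ0‖ ^ n ≤ C2 * g n := hC2 n hn
        _ ≤ max C1 C2 * g n := by
            apply mul_le_mul_of_nonneg_right (le_max_right _ _)
            exact le_trans zero_le_one (hg1 n)
  · intro hkereq
    have h1 : c μ0 ∈ LinearMap.ker (Matrix.toLin' ((M - μ0 • 1) ^ (p + 1))) := by
      rw [hkerEq (p + 1)]
      exact LinearMap.mem_ker.2 hu1
    rw [hkereq] at h1
    rw [hkerEq p] at h1
    exact hune (LinearMap.mem_ker.1 h1)
end

section
/- Let F = ⟨x₁,…,x_m⟩ (m ≥ 2) and ψ ∈ Aut(F) fix x₁ and map x_k ↦ x_k·x_{k-1} for k ≥ 2. Then for each 1 ≤ k ≤ m, the word length |ψⁿ(x_k)|_F (with respect to the standard generators) is bi-Lipschitz equivalent to n^{k-1}: there is C > 0 with (1/C)·n^{k-1} ≤ |ψⁿ(x_k)|_F ≤ C·n^{k-1} for all n ≥ 1. -/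
private lemma aux_abs_lift_le {α : Type*} [DecidableEq α] (g : α → ℤ) (hg : ∀ a, |g a| ≤ 1)
    (w : FreeGroup α) :
    |Multiplicative.toAdd (FreeGroup.lift (fun a => Multiplicative.ofAdd (g a)) w)| ≤
      (w.norm : ℤ) := by
  conv_lhs => rw [← FreeGroup.mk_toWord (x := w)]
  rw [FreeGroup.lift_mk]
  rw [show w.norm = w.toWord.length from rfl]
  generalize w.toWord = L
  induction L with
  | nil => simp
  | cons a L ih =>
    rw [List.map_cons, List.prod_cons, toAdd_mul, List.length_cons]
    refine le_trans (abs_add_le _ _) ?_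
    have h1 : |Multiplicative.toAdd
        (cond a.2 (Multiplicative.ofAdd (g a.1)) (Multiplicative.ofAdd (g a.1))⁻¹)| ≤ 1 := by
      cases a.2 <;> simpa using hg a.1
    push_cast
    linarith

/-- Let `ψ ∈ Aut(F_m)` fix the first generator and map `x_k ↦ x_k·x_{k-1}` for `k ≥ 2`.
Then, for each `k`, the word length `|ψⁿ(x_k)|` is bi-Lipschitz equivalent to `n^{k-1}`
(here the generator of index `j : Fin m` is `x_{j+1}`, so the rate is `n^j`). -/
theorem growth_of_triangular_free_aut {m : ℕ} (hm : 2 ≤ m)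
    (ψ : MulAut (FreeGroup (Fin m)))
    (h0 : ψ (FreeGroup.of (⟨0, by omega⟩ : Fin m)) = FreeGroup.of (⟨0, by omega⟩ : Fin m))
    (hk : ∀ (j : ℕ) (hj : j + 1 < m),
      ψ (FreeGroup.of (⟨j + 1, hj⟩ : Fin m)) =
        FreeGroup.of (⟨j + 1, hj⟩ : Fin m) * FreeGroup.of (⟨j, by omega⟩ : Fin m)) :
    ∀ j : Fin m, ∃ C : ℝ, 0 < C ∧ ∀ n : ℕ, 1 ≤ n →
      (1 / C) * (n : ℝ) ^ (j : ℕ) ≤ (FreeGroup.norm ((ψ ^ n) (FreeGroup.of j)) : ℝ) ∧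
      (FreeGroup.norm ((ψ ^ n) (FreeGroup.of j)) : ℝ) ≤ C * (n : ℝ) ^ (j : ℕ) := by
  have h0' : 0 < m := by omega
  -- ψⁿ fixes the first generator
  have key0 : ∀ n : ℕ, (ψ ^ n) (FreeGroup.of (⟨0, h0'⟩ : Fin m)) =
      FreeGroup.of (⟨0, h0'⟩ : Fin m) := by
    intro n
    induction n with
    | zero => rfl
    | succ n ih => rw [pow_succ, MulAut.mul_apply, h0, ih]
  -- upper bound
  have upper : ∀ (jv : ℕ) (hjv : jv < m) (n : ℕ),
      FreeGroup.norm ((ψ ^ n) (FreeGroup.of (⟨jv, hjv⟩ : Fin m))) ≤ (n + 1) ^ jv := by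
    intro jv
    induction jv with
    | zero =>
      intro hjv n
      rw [key0 n, FreeGroup.norm_of, pow_zero]
    | succ jv ih =>
      intro hjv n
      induction n with
      | zero => simpa using Nat.one_le_pow _ _ (by omega)
      | succ n ihn =>
        rw [pow_succ, MulAut.mul_apply, hk jv hjv, map_mul]
        calc FreeGroup.norm ((ψ ^ n) (FreeGroup.of (⟨jv + 1, hjv⟩ : Fin m)) *
              (ψ ^ n) (FreeGroup.of (⟨jv, by omega⟩ : Fin m)))
            ≤ FreeGroup.norm ((ψ ^ n) (FreeGroup.of (⟨jv + 1, hjv⟩ : Fin m))) +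
              FreeGroup.norm ((ψ ^ n) (FreeGroup.of (⟨jv, by omega⟩ : Fin m))) :=
              FreeGroup.norm_mul_le _ _
          _ ≤ (n + 1) ^ (jv + 1) + (n + 1) ^ jv := Nat.add_le_add ihn (ih _ n)
          _ = (n + 1) ^ jv * (n + 2) := by ring
          _ ≤ (n + 2) ^ jv * (n + 2) :=
              Nat.mul_le_mul_right _ (Nat.pow_le_pow_left (by omega) _)
          _ = (n + 1 + 1) ^ (jv + 1) := by ring
  -- the "coefficient of x₀" homomorphism
  set g : Fin m → ℤ := fun i => if (i : ℕ) = 0 then 1 else 0 with hg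
  set f : FreeGroup (Fin m) →* Multiplicative ℤ :=
    FreeGroup.lift (fun a => Multiplicative.ofAdd (g a)) with hf
  have coeff : ∀ (n jv : ℕ) (hjv : jv < m),
      Multiplicative.toAdd (f ((ψ ^ n) (FreeGroup.of (⟨jv, hjv⟩ : Fin m)))) =
        (n.choose jv : ℤ) := by
    intro n
    induction n with
    | zero =>
      intro jv hjv
      rcases jv with _ | jv <;> simp [f, g]
    | succ n ihn =>
      intro jv hjv
      cases jv with
      | zero =>
        rw [pow_succ, MulAut.mul_apply, h0, ihn 0 hjv]
        simp
      | succ jv =>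
        rw [pow_succ, MulAut.mul_apply, hk jv hjv, map_mul, map_mul, toAdd_mul,
          ihn (jv + 1) hjv, ihn jv (by omega), Nat.choose_succ_succ]
        push_cast
        ring
  -- norm is positive
  have pos : ∀ (n : ℕ) (x : Fin m), 1 ≤ FreeGroup.norm ((ψ ^ n) (FreeGroup.of x)) := by
    intro n x
    rw [Nat.one_le_iff_ne_zero]
    intro h
    rw [FreeGroup.norm_eq_zero] at h
    exact FreeGroup.of_ne_one x ((ψ ^ n).injective (by simpa using h))
  -- lower bound via the coefficient homomorphism
  have lower : ∀ (n jv : ℕ) (hjv : jv < m),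
      n.choose jv ≤ FreeGroup.norm ((ψ ^ n) (FreeGroup.of (⟨jv, hjv⟩ : Fin m))) := by
    intro n jv hjv
    have h1 := aux_abs_lift_le g (by intro a; simp [g]; split <;> simp)
      ((ψ ^ n) (FreeGroup.of (⟨jv, hjv⟩ : Fin m)))
    rw [← hf, coeff n jv hjv] at h1
    exact_mod_cast le_trans (le_abs_self _) h1
  -- binomial lower bound
  have nat_lower : ∀ (n jv : ℕ), 2 * jv ≤ n →
      n ^ jv ≤ 2 ^ jv * jv.factorial * n.choose jv := by
    intro n jv h
    calc n ^ jv ≤ (2 * (n + 1 - jv)) ^ jv := Nat.pow_le_pow_left (by omega) _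
      _ = 2 ^ jv * (n + 1 - jv) ^ jv := mul_pow _ _ _
      _ ≤ 2 ^ jv * n.descFactorial jv :=
          Nat.mul_le_mul_left _ (Nat.pow_sub_le_descFactorial n jv)
      _ = 2 ^ jv * (jv.factorial * n.choose jv) := by
          rw [Nat.descFactorial_eq_factorial_mul_choose]
      _ = 2 ^ jv * jv.factorial * n.choose jv := by ring
  intro j
  set J : ℕ := (j : ℕ) with hJ
  set Cn : ℕ := (2 * J + 2) ^ J * (2 ^ J * J.factorial) with hCn
  have hCn1 : 1 ≤ Cn := by
    refine Nat.one_le_iff_ne_zero.mpr ?_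
    have := J.factorial_pos
    positivity
  refine ⟨(Cn : ℝ), by exact_mod_cast hCn1.trans_lt' (by norm_num), ?_⟩
  intro n hn
  have hje : FreeGroup.of j = FreeGroup.of (⟨J, j.isLt⟩ : Fin m) := rfl
  rw [hje]
  set N : ℕ := FreeGroup.norm ((ψ ^ n) (FreeGroup.of (⟨J, j.isLt⟩ : Fin m))) with hN
  have hNpos : 1 ≤ N := pos n _
  constructor
  · -- lower bound
    rw [div_mul_eq_mul_div, one_mul, div_le_iff₀ (by exact_mod_cast hCn1.trans_lt' (by norm_num))]
    have key : n ^ J ≤ N * Cn := by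
      by_cases hcase : 2 * J ≤ n
      · calc n ^ J ≤ 2 ^ J * J.factorial * n.choose J := nat_lower n J hcase
          _ ≤ 2 ^ J * J.factorial * N := Nat.mul_le_mul_left _ (lower n J j.isLt)
          _ ≤ ((2 * J + 2) ^ J * (2 ^ J * J.factorial)) * N := by
              refine Nat.mul_le_mul_right _ ?_
              calc 2 ^ J * J.factorial ≤ 1 * (2 ^ J * J.factorial) := by ring_nf; exact le_rfl
                _ ≤ (2 * J + 2) ^ J * (2 ^ J * J.factorial) :=
                    Nat.mul_le_mul_right _ (Nat.one_le_pow _ _ (by omega))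
          _ = N * Cn := by rw [hCn]; ring
      · calc n ^ J ≤ (2 * J + 2) ^ J := Nat.pow_le_pow_left (by omega) _
          _ ≤ (2 * J + 2) ^ J * (2 ^ J * J.factorial) := by
              have := J.factorial_pos
              exact Nat.le_mul_of_pos_right _ (by positivity)
          _ = Cn * 1 := by rw [hCn, mul_one]
          _ ≤ Cn * N := Nat.mul_le_mul_left _ hNpos
          _ = N * Cn := by ring
    exact_mod_cast key
  · -- upper bound
    have key : N ≤ Cn * n ^ J := by
      calc N ≤ (n + 1) ^ J := upper J j.isLt n
        _ ≤ (2 * n) ^ J := Nat.pow_le_pow_left (by omega) _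
        _ = 2 ^ J * n ^ J := mul_pow _ _ _
        _ ≤ Cn * n ^ J := by
            refine Nat.mul_le_mul_right _ ?_
            rw [hCn]
            calc 2 ^ J = 1 * (2 ^ J * 1) := by ring
              _ ≤ (2 * J + 2) ^ J * (2 ^ J * J.factorial) :=
                  Nat.mul_le_mul (Nat.one_le_pow _ _ (by omega))
                    (Nat.mul_le_mul_left _ J.factorial_pos)
    exact_mod_cast key
end

section
/- Let G be a group with finite generating set S and φ ∈ Aut(G). Suppose there are C > 0 and p ∈ ℕ with |φⁿ(s)|_S ≤ C·nᵖ for all s ∈ S and n ≥ 1. Then for ψ(x) = g·φ(x)·g⁻¹ (any g ∈ G), there is C' > 0 with |ψⁿ(s)|_S ≤ C'·n^{p+1} for all s ∈ S and n ≥ 1. -/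
/-- Word length with respect to a generating set `S`. -/
noncomputable def wordLength {G : Type*} [Group G] (S : Set G) (g : G) : ℕ :=
  sInf {n | ∃ w : List G, w.length = n ∧ (∀ x ∈ w, x ∈ S ∨ x⁻¹ ∈ S) ∧ w.prod = g}

section aux

variable {G : Type*} [Group G] {S : Set G}

lemma wordLength_le_of_word (w : List G) (hw : ∀ x ∈ w, x ∈ S ∨ x⁻¹ ∈ S) :
    wordLength S w.prod ≤ w.length := Nat.sInf_le ⟨w, rfl, hw, rfl⟩

lemma exists_min_word (hS : Subgroup.closure S = ⊤) (x : G) :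
    ∃ w : List G, w.length = wordLength S x ∧ (∀ y ∈ w, y ∈ S ∨ y⁻¹ ∈ S) ∧ w.prod = x := by
  have hx : x ∈ Submonoid.closure (S ∪ S⁻¹) := by
    rw [← Subgroup.closure_toSubmonoid, hS]; trivial
  obtain ⟨l, hl, hpl⟩ := Submonoid.exists_list_of_mem_closure hx
  have hl' : ∀ y ∈ l, y ∈ S ∨ y⁻¹ ∈ S := by
    intro y hy
    rcases hl y hy with h | h
    · exact Or.inl h
    · exact Or.inr (Set.mem_inv.mp h)
  have hne : {n | ∃ w : List G, w.length = n ∧ (∀ y ∈ w, y ∈ S ∨ y⁻¹ ∈ S) ∧ w.prod = x}.Nonempty :=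
    ⟨l.length, l, rfl, hl', hpl⟩
  exact Nat.sInf_mem hne

lemma wordLength_mul_le (hS : Subgroup.closure S = ⊤) (a b : G) :
    wordLength S (a * b) ≤ wordLength S a + wordLength S b := by
  obtain ⟨wa, hla, hwa, hpa⟩ := exists_min_word hS a
  obtain ⟨wb, hlb, hwb, hpb⟩ := exists_min_word hS b
  have := wordLength_le_of_word (S := S) (wa ++ wb) (by
    intro x hx; rcases List.mem_append.mp hx with h | h
    · exact hwa x h
    · exact hwb x h)
  simpa [hpa, hpb, hla, hlb] using this

lemma wordLength_inv_le (hS : Subgroup.closure S = ⊤) (x : G) :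
    wordLength S x⁻¹ ≤ wordLength S x := by
  obtain ⟨w, hl, hw, hp⟩ := exists_min_word hS x
  have h2 : ∀ y ∈ (w.map fun t => t⁻¹).reverse, y ∈ S ∨ y⁻¹ ∈ S := by
    intro y hy
    rw [List.mem_reverse, List.mem_map] at hy
    obtain ⟨t, ht, rfl⟩ := hy
    rcases hw t ht with h | h
    · exact Or.inr (by simpa using h)
    · exact Or.inl h
  have := wordLength_le_of_word (S := S) ((w.map fun t => t⁻¹).reverse) h2
  rw [← List.prod_inv_reverse, hp] at this
  simpa [hl] using this

lemma wordLength_one : wordLength S (1 : G) = 0 :=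
  Nat.le_zero.mp (wordLength_le_of_word ([] : List G) (by simp))

lemma wordLength_list_prod_le (hS : Subgroup.closure S = ⊤) :
    ∀ l : List G, wordLength S l.prod ≤ (l.map (wordLength S)).sum := by
  intro l
  induction l with
  | nil => simp [wordLength_one]
  | cons a l ih =>
      simp only [List.prod_cons, List.map_cons, List.sum_cons]
      exact le_trans (wordLength_mul_le hS a l.prod) (Nat.add_le_add_left ih _)

end aux

/-- If `|φⁿ(s)| ≤ C·nᵖ` for all generators `s` and `n ≥ 1`, and `ψ(x) = g·φ(x)·g⁻¹`, then
`|ψⁿ(s)| ≤ C'·n^{p+1}` for all generators `s` and `n ≥ 1`. -/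
theorem polynomial_growth_of_conjugated_aut {G : Type*} [Group G]
    (S : Finset G) (hS : Subgroup.closure (S : Set G) = ⊤)
    (φ : MulAut G) (C : ℝ) (hC : 0 < C) (p : ℕ)
    (hpoly : ∀ s ∈ S, ∀ n : ℕ, 1 ≤ n →
      (wordLength (S : Set G) ((φ ^ n) s) : ℝ) ≤ C * (n : ℝ) ^ p)
    (g : G) (ψ : MulAut G) (hψ : ∀ x : G, ψ x = g * φ x * g⁻¹) :
    ∃ C' : ℝ, 0 < C' ∧ ∀ s ∈ S, ∀ n : ℕ, 1 ≤ n →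
      (wordLength (S : Set G) ((ψ ^ n) s) : ℝ) ≤ C' * (n : ℝ) ^ (p + 1) := by
  set Sx : Set G := (S : Set G)
  -- bound for letters (elements of S or inverses of elements of S)
  have hletter : ∀ t : G, (t ∈ Sx ∨ t⁻¹ ∈ Sx) → ∀ n : ℕ, 1 ≤ n →
      (wordLength Sx ((φ ^ n) t) : ℝ) ≤ C * (n : ℝ) ^ p := by
    intro t ht n hn
    rcases ht with h | h
    · exact hpoly t h n hn
    · have h1 : wordLength Sx ((φ ^ n) t) ≤ wordLength Sx ((φ ^ n) t⁻¹) := by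
        have := wordLength_inv_le (S := Sx) hS ((φ ^ n) t⁻¹)
        simpa using this
      calc (wordLength Sx ((φ ^ n) t) : ℝ) ≤ (wordLength Sx ((φ ^ n) t⁻¹) : ℝ) := by
            exact_mod_cast h1
        _ ≤ C * (n : ℝ) ^ p := hpoly _ h n hn
  -- fix a minimal word for g
  obtain ⟨wg, hwgl, hwg, hwgp⟩ := exists_min_word (S := Sx) hS g
  set L : ℕ := wordLength Sx g with hL
  -- bound on |φⁱ g|
  have hφg : ∀ i : ℕ, 1 ≤ i → (wordLength Sx ((φ ^ i) g) : ℝ) ≤ (L : ℝ) * (C * (i : ℝ) ^ p) := by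
    intro i hi
    have h1 : (φ ^ i) g = (wg.map (φ ^ i)).prod := by
      rw [← hwgp]; exact map_list_prod (φ ^ i) wg
    have h2 : wordLength Sx ((φ ^ i) g) ≤ ((wg.map (φ ^ i)).map (wordLength Sx)).sum := by
      rw [h1]; exact wordLength_list_prod_le hS _
    have h3 : (((wg.map (φ ^ i)).map (wordLength Sx)).sum : ℝ) ≤ (L : ℝ) * (C * (i : ℝ) ^ p) := by
      rw [List.map_map]
      have : ∀ t ∈ wg, ((wordLength Sx ∘ (φ ^ i)) t : ℝ) ≤ C * (i : ℝ) ^ p := by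
        intro t ht; exact hletter t (hwg t ht) i hi
      calc ((wg.map (wordLength Sx ∘ (φ ^ i))).sum : ℝ)
          = ((wg.map (wordLength Sx ∘ (φ ^ i))).map ((↑) : ℕ → ℝ)).sum := by
            exact_mod_cast (Nat.cast_list_sum _).symm
        _ ≤ (wg.map fun _ => C * (i : ℝ) ^ p).sum := by
            rw [List.map_map]
            apply List.sum_le_sum
            intro t ht
            simpa using this t ht
        _ = (wg.length : ℝ) * (C * (i : ℝ) ^ p) := by
            simp [List.map_const', List.sum_replicate, nsmul_eq_mul]
        _ = (L : ℝ) * (C * (i : ℝ) ^ p) := by rw [hwgl]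
    calc (wordLength Sx ((φ ^ i) g) : ℝ) ≤ _ := by exact_mod_cast h2
      _ ≤ _ := h3
  -- the conjugating element
  set c : ℕ → G := fun n => ((List.range n).map fun i => (φ ^ i) g).prod with hc
  have hc0 : c 0 = 1 := by simp [hc]
  have hcsucc : ∀ n, c (n + 1) = g * φ (c n) := by
    intro n
    have h1 : φ (c n) = ((List.range n).map fun i => (φ ^ (i + 1)) g).prod := by
      simp only [hc]
      rw [map_list_prod φ, List.map_map]
      congr 1
      apply List.map_congr_left
      intro i _
      show φ ((φ ^ i) g) = (φ ^ (i + 1)) g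
      rw [pow_succ' φ i]
      rfl
    have h2 : c (n + 1) = g * ((List.range n).map fun i => (φ ^ (i + 1)) g).prod := by
      simp only [hc]
      rw [List.range_succ_eq_map, List.map_cons, List.prod_cons, List.map_map]
      simp only [pow_zero, MulAut.one_apply]
      rfl
    rw [h2, h1]
  -- conjugation formula
  have hpsi : ∀ n (x : G), (ψ ^ n) x = c n * (φ ^ n) x * (c n)⁻¹ := by
    intro n
    induction n with
    | zero => intro x; simp [hc0]
    | succ n ih =>
        intro x
        have : (ψ ^ (n + 1)) x = ψ ((ψ ^ n) x) := by
          rw [pow_succ' ψ n]; rfl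
        rw [this, ih, hψ, hcsucc n]
        simp [pow_succ' φ n, mul_assoc, MulAut.mul_apply]
  -- bound on |c n|
  have hcn : ∀ n : ℕ, 1 ≤ n →
      (wordLength Sx (c n) : ℝ) ≤ (L : ℝ) * (1 + C) * (n : ℝ) ^ (p + 1) := by
    intro n hn
    have h1 : wordLength Sx (c n) ≤
        (((List.range n).map fun i => (φ ^ i) g).map (wordLength Sx)).sum := by
      rw [hc]; exact wordLength_list_prod_le hS _
    have hterm : ∀ i ∈ List.range n,
        ((wordLength Sx ((φ ^ i) g)) : ℝ) ≤ (L : ℝ) * (1 + C) * (n : ℝ) ^ p := by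
      intro i hi
      have hin : i < n := List.mem_range.mp hi
      have hnp : (1 : ℝ) ≤ (n : ℝ) ^ p := one_le_pow₀ (by exact_mod_cast hn)
      rcases Nat.eq_zero_or_pos i with rfl | hipos
      · simp only [pow_zero, MulAut.one_apply]
        calc (wordLength Sx g : ℝ) = (L : ℝ) := by rw [hL]
          _ = (L : ℝ) * 1 := by ring
          _ ≤ (L : ℝ) * ((1 + C) * (n : ℝ) ^ p) := by
              apply mul_le_mul_of_nonneg_left _ (by positivity)
              nlinarith
          _ = (L : ℝ) * (1 + C) * (n : ℝ) ^ p := by ring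
      · calc (wordLength Sx ((φ ^ i) g) : ℝ) ≤ (L : ℝ) * (C * (i : ℝ) ^ p) := hφg i hipos
          _ ≤ (L : ℝ) * (1 + C) * (n : ℝ) ^ p := by
              have hip : ((i : ℝ)) ^ p ≤ ((n : ℝ)) ^ p := by
                apply pow_le_pow_left₀ (by positivity) (by exact_mod_cast hin.le)
              have hnn : (0:ℝ) ≤ (n : ℝ) ^ p := by positivity
              have h5 : C * (i : ℝ) ^ p ≤ (1 + C) * (n : ℝ) ^ p := by nlinarith
              calc (L : ℝ) * (C * (i : ℝ) ^ p) ≤ (L : ℝ) * ((1 + C) * (n : ℝ) ^ p) :=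
                    mul_le_mul_of_nonneg_left h5 (Nat.cast_nonneg L)
                _ = (L : ℝ) * (1 + C) * (n : ℝ) ^ p := by ring
    have h2 : ((((List.range n).map fun i => (φ ^ i) g).map (wordLength Sx)).sum : ℝ)
        ≤ (n : ℝ) * ((L : ℝ) * (1 + C) * (n : ℝ) ^ p) := by
      rw [List.map_map]
      calc (((List.range n).map (wordLength Sx ∘ fun i => (φ ^ i) g)).sum : ℝ)
          = (((List.range n).map (wordLength Sx ∘ fun i => (φ ^ i) g)).map ((↑) : ℕ → ℝ)).sum := by
            exact_mod_cast (Nat.cast_list_sum _).symm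
        _ ≤ ((List.range n).map fun _ => (L : ℝ) * (1 + C) * (n : ℝ) ^ p).sum := by
            rw [List.map_map]
            apply List.sum_le_sum
            intro i hi
            simpa using hterm i hi
        _ = (n : ℝ) * ((L : ℝ) * (1 + C) * (n : ℝ) ^ p) := by
            simp [List.map_const', List.sum_replicate, nsmul_eq_mul]
    calc (wordLength Sx (c n) : ℝ) ≤ _ := by exact_mod_cast h1
      _ ≤ (n : ℝ) * ((L : ℝ) * (1 + C) * (n : ℝ) ^ p) := h2
      _ = (L : ℝ) * (1 + C) * (n : ℝ) ^ (p + 1) := by ring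
  refine ⟨2 * (L : ℝ) * (1 + C) + C, by positivity, ?_⟩
  intro s hs n hn
  have hnp : (1 : ℝ) ≤ (n : ℝ) ^ p := one_le_pow₀ (by exact_mod_cast hn)
  have key : wordLength Sx ((ψ ^ n) s) ≤
      wordLength Sx (c n) + wordLength Sx ((φ ^ n) s) + wordLength Sx (c n) := by
    rw [hpsi n s]
    calc wordLength Sx (c n * (φ ^ n) s * (c n)⁻¹)
        ≤ wordLength Sx (c n * (φ ^ n) s) + wordLength Sx (c n)⁻¹ :=
          wordLength_mul_le hS _ _
      _ ≤ wordLength Sx (c n) + wordLength Sx ((φ ^ n) s) + wordLength Sx (c n) :=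
          add_le_add (wordLength_mul_le hS _ _) (wordLength_inv_le hS _)
  have h1 : (wordLength Sx ((ψ ^ n) s) : ℝ)
      ≤ 2 * (wordLength Sx (c n) : ℝ) + (wordLength Sx ((φ ^ n) s) : ℝ) := by
    have := (Nat.cast_le (α := ℝ)).mpr key
    push_cast at this
    linarith
  have h2 := hcn n hn
  have h3 := hpoly s hs n hn
  have hpow : (n : ℝ) ^ p ≤ (n : ℝ) ^ (p + 1) := by
    apply pow_le_pow_right₀ (by exact_mod_cast hn)
    omega
  calc (wordLength Sx ((ψ ^ n) s) : ℝ)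
      ≤ 2 * ((L : ℝ) * (1 + C) * (n : ℝ) ^ (p + 1)) + C * (n : ℝ) ^ p := by linarith
    _ ≤ 2 * ((L : ℝ) * (1 + C) * (n : ℝ) ^ (p + 1)) + C * (n : ℝ) ^ (p + 1) := by nlinarith
    _ = (2 * (L : ℝ) * (1 + C) + C) * (n : ℝ) ^ (p + 1) := by ring
end
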